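/- Let F be a field of characteristic zero, fix a monomial ordering ≺ on F[x_1,...,x_d], and suppose {P_1,...,P_n} ⊂ F[x_1,...,x_d] is a "reverse" reduced basis with respect to ≺. Then T = {lm(P_1), lm(P_2), ..., lm(P_n)} is a set of n distinct monomials and is a monomial interpolating basis for the interpolation conditions Δ = δ_0 ∘ {P_1(D),...,P_n(D)}: for every (f_1,...,f_n) ∈ F^n there exists a unique g in the F-linear span of T with (P_i(D)g)(0) = f_i for all i. -/

import Mathlib

open MvPolynomial

/-- The iterated partial derivative operator `D^α = ∂^{α_1}_{x_1} ⋯ ∂^{α_d}_{x_d}`. -/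
noncomputable def Dmon (F : Type*) [CommSemiring F] {d : ℕ} (α : Fin d →₀ ℕ) :
    Module.End F (MvPolynomial (Fin d) F) :=
  ((List.finRange d).map fun i =>
    ((pderiv i : Derivation F (MvPolynomial (Fin d) F) (MvPolynomial (Fin d) F)) :
      MvPolynomial (Fin d) F →ₗ[F] MvPolynomial (Fin d) F) ^ (α i)).prod

/-- The differential operator `P(D) = Σ_α P̂(α) D^α` induced by a polynomial `P`. -/
noncomputable def PD {F : Type*} [Field F] {d : ℕ} (P : MvPolynomial (Fin d) F) :
    Module.End F (MvPolynomial (Fin d) F) :=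
  ∑ α ∈ P.support, P.coeff α • Dmon F α

/-- The linear functional `δ₀ ∘ P(D) : g ↦ (P(D) g)(0)`. -/
noncomputable def delta0PD {F : Type*} [Field F] {d : ℕ} (P : MvPolynomial (Fin d) F) :
    MvPolynomial (Fin d) F →ₗ[F] F :=
  (MvPolynomial.aeval (0 : Fin d → F)).toLinearMap ∘ₗ PD P

/-- `prec` is a monomial ordering: a linear well-ordering of the monomials (identified with
their exponent vectors) that is compatible with multiplication of monomials. -/
structure IsMonomialOrder {d : ℕ} (prec : (Fin d →₀ ℕ) → (Fin d →₀ ℕ) → Prop) : Prop where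
  irrefl : ∀ a, ¬ prec a a
  trans : ∀ a b c, prec a b → prec b c → prec a c
  total : ∀ a b, a ≠ b → prec a b ∨ prec b a
  wf : WellFounded prec
  add_compat : ∀ a b c, prec a b → prec (a + c) (b + c)

/-- `m` is the `prec`-least monomial occurring in `P` with nonzero coefficient,
i.e. `X^m = lm(P)`. -/
def IsLeastMon {F : Type*} [Field F] {d : ℕ} (prec : (Fin d →₀ ℕ) → (Fin d →₀ ℕ) → Prop)
    (P : MvPolynomial (Fin d) F) (m : Fin d →₀ ℕ) : Prop :=
  m ∈ P.support ∧ ∀ m' ∈ P.support, m' ≠ m → prec m m'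

/-- `{P_1, ..., P_n}` is a "reverse" reduced basis w.r.t. `prec`: the `P_i` are linearly
independent and `lm(P_i) ∉ Λ{P_j}` for all `i < j`. -/
def IsRevReducedBasis {F : Type*} [Field F] {d n : ℕ}
    (prec : (Fin d →₀ ℕ) → (Fin d →₀ ℕ) → Prop) (P : Fin n → MvPolynomial (Fin d) F) : Prop :=
  LinearIndependent F P ∧
    ∀ i j : Fin n, i < j → ∀ m, IsLeastMon prec (P i) m → m ∉ (P j).support

open scoped Nat Matrix

/-! Applied to a monomial `X^γ`, the functional `δ₀ ∘ P(D)` returns `γ!` times the coefficient of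
`X^γ` in `P`. Hence the interpolation matrix `(δ₀ P_i(D) X^{β_j})_{i,j}` has entries
`β_j! · P̂_i(β_j)`; since `lm(P_j)` does not occur in `P_i` for `j < i` it is upper triangular,
and its diagonal entries `β_i! · P̂_i(β_i)` are nonzero in characteristic zero. -/

section Derivatives

variable {σ R : Type*} [CommSemiring R]

lemma pderiv_pow_monomial (i : σ) (k : ℕ) (γ : σ →₀ ℕ) (c : R) :
    (((pderiv i : Derivation R (MvPolynomial σ R) (MvPolynomial σ R)) :
      MvPolynomial σ R →ₗ[R] MvPolynomial σ R) ^ k) (monomial γ c) =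
      monomial (γ - Finsupp.single i k) (c * (γ i).descFactorial k) := by
  induction k with
  | zero => simp
  | succ k ih =>
    rw [pow_succ', Module.End.mul_apply, ih, Derivation.coeFn_coe, pderiv_monomial, tsub_tsub,
      ← Finsupp.single_add, Finsupp.tsub_apply, Finsupp.single_eq_same, Nat.descFactorial_succ]
    push_cast
    ring_nf

lemma list_prod_pderiv_pow_monomial (α : σ →₀ ℕ) {l : List σ} (hl : l.Nodup) (γ : σ →₀ ℕ)
    (c : R) :
    ((l.map fun i => ((pderiv i : Derivation R (MvPolynomial σ R) (MvPolynomial σ R)) :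
        MvPolynomial σ R →ₗ[R] MvPolynomial σ R) ^ (α i)).prod) (monomial γ c) =
      monomial (γ - (l.map fun i => Finsupp.single i (α i)).sum)
        (c * (l.map fun i => (γ i).descFactorial (α i)).prod) := by
  induction l with
  | nil => simp
  | cons i l ih =>
    rw [List.nodup_cons] at hl
    have hi : (l.map fun j => Finsupp.single j (α j)).sum i = 0 := by
      rw [← Finsupp.applyAddHom_apply, map_list_sum, List.map_map]
      exact List.sum_eq_zero fun x hx => by
        obtain ⟨j, hj, rfl⟩ := List.mem_map.1 hx
        simp [ne_of_mem_of_not_mem hj hl.1]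
    simp only [List.map_cons, List.prod_cons, List.sum_cons, Module.End.mul_apply, ih hl.2,
      pderiv_pow_monomial, Finsupp.tsub_apply, hi, tsub_zero, tsub_tsub, Nat.cast_mul]
    rw [add_comm]
    ring_nf

lemma Dmon_monomial {d : ℕ} (α γ : Fin d →₀ ℕ) (c : R) :
    Dmon R α (monomial γ c) = monomial (γ - α) (c * ∏ i, (γ i).descFactorial (α i)) := by
  have hsum : ((List.finRange d).map fun i => Finsupp.single i (α i)).sum = α := by
    rw [← Fin.sum_univ_def, Finsupp.univ_sum_single]
  rw [Dmon, list_prod_pderiv_pow_monomial α (List.nodup_finRange d), hsum, ← Fin.prod_univ_def]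

lemma constantCoeff_Dmon_monomial {d : ℕ} (α γ : Fin d →₀ ℕ) (c : R) :
    constantCoeff (Dmon R α (monomial γ c)) = if α = γ then c * ∏ i, ((γ i)! : R) else 0 := by
  classical
  rw [Dmon_monomial, constantCoeff_monomial]
  split_ifs with hzero hαγ hαγ
  · subst hαγ
    simp [Nat.descFactorial_self]
  · obtain ⟨i, hi⟩ : ∃ i, γ i < α i := by
      by_contra! hle
      exact hαγ (le_antisymm hle (tsub_eq_zero_iff_le.1 hzero))
    rw [Finset.prod_eq_zero (Finset.mem_univ i) (Nat.descFactorial_eq_zero_iff_lt.2 hi),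
      Nat.cast_zero, mul_zero]
  · simp_all
  · rfl

end Derivatives

lemma delta0PD_monomial_one {F : Type*} [Field F] {d : ℕ} (P : MvPolynomial (Fin d) F)
    (γ : Fin d →₀ ℕ) :
    delta0PD P (monomial γ 1) = (∏ i, ((γ i)! : F)) * P.coeff γ := by
  simp only [delta0PD, PD, LinearMap.comp_apply, LinearMap.coe_sum, Finset.sum_apply,
    LinearMap.smul_apply, map_sum, map_smul, AlgHom.toLinearMap_apply, aeval_zero,
    Algebra.algebraMap_self, RingHom.id_apply, constantCoeff_Dmon_monomial, one_mul, smul_eq_mul,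
    mul_ite, mul_zero, Finset.sum_ite_eq', mem_support_iff]
  split_ifs with h
  · ring
  · simp [notMem_support_iff.1 h]

lemma Matrix.IsUpperTriangular.isUnit {m K : Type*} [Fintype m] [LinearOrder m] [CommRing K]
    {M : Matrix m m K} (hM : M.IsUpperTriangular) (hdiag : ∀ i, IsUnit (M i i)) : IsUnit M := by
  rw [Matrix.isUnit_iff_isUnit_det, Matrix.det_of_isUpperTriangular hM]
  exact IsUnit.prod_univ_iff.2 hdiag

lemma existsUnique_mem_span_of_isUnit {K V ι : Type*} [CommRing K] [AddCommGroup V] [Module K V]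
    [Fintype ι] [DecidableEq ι] (L : ι → V →ₗ[K] K) (v : ι → V)
    (hM : IsUnit (Matrix.of fun i j => L i (v j))) (f : ι → K) :
    ∃! g, g ∈ Submodule.span K (Set.range v) ∧ ∀ i, L i g = f i := by
  set M := Matrix.of fun i j => L i (v j)
  have hL : ∀ c : ι → K, (fun i => L i (∑ j, c j • v j)) = M *ᵥ c := fun c => by
    ext i
    simp [M, Matrix.mulVec, dotProduct, mul_comm]
  obtain ⟨c, hc⟩ := Matrix.mulVec_surjective_iff_isUnit.2 hM f
  refine ⟨∑ j, c j • v j, ⟨?_, fun i => by rw [← hc, ← hL]⟩, ?_⟩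
  · exact Submodule.sum_mem _ fun j _ => Submodule.smul_mem _ _ (Submodule.subset_span ⟨j, rfl⟩)
  · rintro g ⟨hg, hLg⟩
    obtain ⟨c', rfl⟩ := (Submodule.mem_span_range_iff_exists_fun K).1 hg
    have hc' : M *ᵥ c' = M *ᵥ c := by rw [hc, ← hL]; exact funext hLg
    rw [Matrix.mulVec_injective_of_isUnit hM hc']

namespace IsRevReducedBasis

variable {F : Type*} [Field F] {d n : ℕ} {prec : (Fin d →₀ ℕ) → (Fin d →₀ ℕ) → Prop}
  {P : Fin n → MvPolynomial (Fin d) F} {β : Fin n → (Fin d →₀ ℕ)}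

lemma leastMon_notMem_support (hP : IsRevReducedBasis prec P)
    (hβ : ∀ i, IsLeastMon prec (P i) (β i)) {i j : Fin n} (hij : i < j) : β i ∉ (P j).support :=
  hP.2 i j hij (β i) (hβ i)

lemma injective_leastMon (hP : IsRevReducedBasis prec P)
    (hβ : ∀ i, IsLeastMon prec (P i) (β i)) : Function.Injective β := by
  intro i j hij
  by_contra hne
  rcases lt_or_gt_of_ne hne with h | h
  · exact hP.leastMon_notMem_support hβ h (hij ▸ (hβ j).1)
  · exact hP.leastMon_notMem_support hβ h (hij ▸ (hβ i).1)

lemma isUpperTriangular_delta0PD_monomial (hP : IsRevReducedBasis prec P)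
    (hβ : ∀ i, IsLeastMon prec (P i) (β i)) :
    (Matrix.of fun i j => delta0PD (P i) (monomial (β j) (1 : F))).IsUpperTriangular := by
  intro i j hji
  rw [Matrix.of_apply, delta0PD_monomial_one,
    notMem_support_iff.1 (hP.leastMon_notMem_support hβ (show j < i from hji)), mul_zero]

end IsRevReducedBasis

lemma delta0PD_monomial_one_ne_zero {F : Type*} [Field F] [CharZero F] {d : ℕ}
    {P : MvPolynomial (Fin d) F} {γ : Fin d →₀ ℕ} (hγ : γ ∈ P.support) :
    delta0PD P (monomial γ 1) ≠ 0 := by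
  rw [delta0PD_monomial_one]
  exact mul_ne_zero (Finset.prod_ne_zero_iff.2 fun i _ => mod_cast (γ i).factorial_ne_zero)
    (mem_support_iff.1 hγ)

theorem revReducedBasis_leastMon_isMonIntBasis_general {F : Type*} [Field F] [CharZero F] {d n : ℕ}
    (prec : (Fin d →₀ ℕ) → (Fin d →₀ ℕ) → Prop)
    (P : Fin n → MvPolynomial (Fin d) F) (hP : IsRevReducedBasis prec P)
    (β : Fin n → (Fin d →₀ ℕ)) (hβ : ∀ i, IsLeastMon prec (P i) (β i)) :
    Function.Injective β ∧
    ∀ f : Fin n → F, ∃! g : MvPolynomial (Fin d) F,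
      g ∈ Submodule.span F (Set.range fun j => (monomial (β j) (1 : F) : MvPolynomial (Fin d) F))
        ∧ ∀ i, delta0PD (P i) g = f i :=
  ⟨hP.injective_leastMon hβ, existsUnique_mem_span_of_isUnit _ _
    ((hP.isUpperTriangular_delta0PD_monomial hβ).isUnit fun i =>
      (delta0PD_monomial_one_ne_zero (hβ i).1).isUnit)⟩

/-- If `{P_1, ..., P_n}` is a "reverse" reduced basis w.r.t. `≺` and
`X^{β_i} = lm(P_i)`, then `T = {lm(P_1), ..., lm(P_n)}` consists of `n` distinct monomials and
is a monomial interpolating basis for `Δ = δ₀ ∘ {P_1(D), ..., P_n(D)}`: for every `f ∈ F^n`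
there is a unique `g` in the span of `T` with `(P_i(D) g)(0) = f_i` for all `i`. -/
theorem revReducedBasis_leastMon_isMonIntBasis {F : Type*} [Field F] [CharZero F] {d n : ℕ}
    (prec : (Fin d →₀ ℕ) → (Fin d →₀ ℕ) → Prop) (hord : IsMonomialOrder prec)
    (P : Fin n → MvPolynomial (Fin d) F) (hP : IsRevReducedBasis prec P)
    (β : Fin n → (Fin d →₀ ℕ)) (hβ : ∀ i, IsLeastMon prec (P i) (β i)) :
    Function.Injective β ∧
    ∀ f : Fin n → F, ∃! g : MvPolynomial (Fin d) F,
      g ∈ Submodule.span F (Set.range fun j => (monomial (β j) (1 : F) : MvPolynomial (Fin d) F))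
        ∧ ∀ i, delta0PD (P i) g = f i :=
  revReducedBasis_leastMon_isMonIntBasis_general prec P hP β hβ
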